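/- Let Re β ≥ 0 and let E_β denote the inverse of C_{id-1} - Id on z^{-β-2}ℂ[[z^{-1}]]. Then the formal Borel counterpart of E_β is multiplication by 1/(e^ζ - 1): if B φ̃ = φ̂ ∈ ζ^{β+1}ℂ[[ζ]], then B(E_β φ̃)(ζ) = φ̂(ζ)/(e^ζ - 1) ∈ ζ^β ℂ[[ζ]]. -/

import Mathlib

open Finset PowerSeries

/-- Coefficient of `w^k` in the binomial series `(1-w)^{-n-β-1}`. -/
noncomputable def binomCoeff (β : ℂ) (n k : ℕ) : ℂ :=
  (∏ j ∈ Finset.range k, ((n : ℂ) + β + 1 + (j : ℂ))) / (k.factorial : ℂ)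

/-- The operator `C_{id-1} - Id` on coefficients: a series `z^{-β-1}∑ d_n z^{-n}`
is sent to `z^{-β-2}∑ (Tmap β d)_m z^{-m}`. -/
noncomputable def Tmap (β : ℂ) (d : ℕ → ℂ) : ℕ → ℂ :=
  fun m => ∑ n ∈ Finset.range (m + 1), d n * binomCoeff β n (m + 1 - n)

/-! Under the Borel transform, `C_{id-1} - Id` becomes multiplication by `e^ζ - 1 = ζ · ∑ ζ^i/(i+1)!`,
so after cancelling `ζ` the claim is a Cauchy product identity, checked coefficientwise. Each term
reduces to `Γ(z + k) = Γ(z) · z(z+1)⋯(z+k-1)` with `z = n + β + 1`, used in the form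
`1/Γ(z) = z(z+1)⋯(z+k-1) / Γ(z + k)`, which holds for every `z` because Mathlib's `Γ` vanishes
at its poles. -/

theorem Complex.inv_Gamma_eq_prod_mul_inv_Gamma_add_nat (z : ℂ) (k : ℕ) :
    (Complex.Gamma z)⁻¹ = (∏ j ∈ range k, (z + j)) * (Complex.Gamma (z + k))⁻¹ := by
  induction k with
  | zero => simp
  | succ k ih =>
    rw [ih, prod_range_succ, Complex.one_div_Gamma_eq_self_mul_one_div_Gamma_add_one (z + k),
      Nat.cast_succ, add_assoc, mul_assoc]

theorem binomCoeff_div_Gamma (β : ℂ) (n k : ℕ) :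
    binomCoeff β n k / Complex.Gamma ((n : ℂ) + β + 1 + k) =
      (Complex.Gamma ((n : ℂ) + β + 1))⁻¹ / k.factorial := by
  rw [binomCoeff, Complex.inv_Gamma_eq_prod_mul_inv_Gamma_add_nat _ k]
  ring

theorem PowerSeries.exp_sub_one_eq_X_mul (K : Type*) [Field K] [CharZero K] :
    exp K - 1 = X * PowerSeries.mk fun i => ((i + 1).factorial : K)⁻¹ := by
  ext (_ | i)
  · simp
  · simp [coeff_succ_X_mul, coeff_exp, coeff_one]

theorem borel_counterpart_of_Ebeta_general (β : ℂ) (c d : ℕ → ℂ)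
    (h : Tmap β d = c) :
    (PowerSeries.exp ℂ - 1) *
        PowerSeries.mk (fun n => d n / Complex.Gamma ((n : ℂ) + β + 1))
      = PowerSeries.X *
        PowerSeries.mk (fun n => c n / Complex.Gamma ((n : ℂ) + β + 2)) := by
  rw [exp_sub_one_eq_X_mul, mul_assoc, mul_comm (PowerSeries.mk _)]
  congr 1
  ext m
  rw [coeff_mul, Finset.Nat.sum_antidiagonal_eq_sum_range_succ_mk, coeff_mk, ← h, Tmap, sum_div]
  refine sum_congr rfl fun n hn => ?_
  have hnm : n ≤ m := Nat.lt_succ_iff.mp (mem_range.mp hn)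
  have hterm := binomCoeff_div_Gamma β n (m + 1 - n)
  rw [Nat.cast_sub (by omega : n ≤ m + 1), Nat.cast_succ,
    show (n : ℂ) + β + 1 + (m + 1 - n) = m + β + 2 by ring] at hterm
  rw [coeff_mk, coeff_mk, mul_div_assoc, hterm, show m - n + 1 = m + 1 - n by omega]
  ring

/-- if `ψ̃ = E_β φ̃`, i.e. `(C_{id-1} - Id) ψ̃ = φ̃` with
`φ̃ = z^{-β-2}∑ c_n z^{-n}` and `ψ̃ = z^{-β-1}∑ d_n z^{-n}`, then the formal Borel
transform of `ψ̃` is `φ̂(ζ)/(e^ζ-1)`: writing `B φ̃ = ζ^{β+1} F(ζ)` and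
`B ψ̃ = ζ^β G(ζ)`, one has `(e^ζ - 1)·G = ζ·F` as formal power series. -/
theorem borel_counterpart_of_Ebeta (β : ℂ) (hβ : 0 ≤ β.re) (c d : ℕ → ℂ)
    (h : Tmap β d = c) :
    (PowerSeries.exp ℂ - 1) *
        PowerSeries.mk (fun n => d n / Complex.Gamma ((n : ℂ) + β + 1))
      = PowerSeries.X *
        PowerSeries.mk (fun n => c n / Complex.Gamma ((n : ℂ) + β + 2)) :=
  borel_counterpart_of_Ebeta_general β c d h
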